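/- arXiv:2002.06110 — 3 statements merged into one kernel-verified Lean document; each statement's English description precedes it below -/
import Mathlib

section
/- Let A be a differential graded algebra over a field k with generators e of degree 0 and h of degree -1 subject only to the relations d(e) = z(eh - he) and d(h) = e - e^2 - z h^2 (where z is a formal central indeterminate of degree 2, and d is extended by the Leibniz rule). Then d^2 = 0 on A, i.e. these relations are consistent with a dg algebra structure. -/
/-!
The signs `(-1)^i` and `(-1)^(i+1)` cancel, so `D ∘ D` satisfies the ungraded Leibniz rule
`D²(xy) = D²x · y + x · D²y` for homogeneous `x`. Hence left multiplication by a homogeneous `g`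
with `D²g = 0` commutes with `D²`, and the elements whose left multiplication commutes with `D²`
form a subring. It therefore suffices to check `D² = 0` on the generators: for `z` this is
trivial, for `e` and `h` it is a computation in the noncommutative polynomials using that `z` is
central. Finally `D²x = x · D²1 = 0`.
-/

section

variable {A : Type*} [Ring A]

def mulLeftCommutant (Δ : A →+ A) : Subring A where
  carrier := {x | ∀ y, Δ (x * y) = x * Δ y}
  one_mem' y := by rw [one_mul, one_mul]
  mul_mem' {a b} ha hb y := by rw [mul_assoc, ha (b * y), hb y, mul_assoc]
  zero_mem' y := by rw [zero_mul, zero_mul, map_zero]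
  add_mem' {a b} ha hb y := by rw [add_mul, map_add, ha y, hb y, add_mul]
  neg_mem' {a} ha y := by rw [neg_mul, map_neg, ha y, neg_mul]

theorem map_eq_zero_of_mem_mulLeftCommutant {Δ : A →+ A} (hΔ : Δ 1 = 0) {x : A}
    (hx : x ∈ mulLeftCommutant Δ) : Δ x = 0 := by
  simpa [hΔ] using hx 1

def IsGradedLeibniz (𝒜 : ℤ → AddSubgroup A) (D : A →+ A) : Prop :=
  ∀ (i : ℤ) (x y : A), x ∈ 𝒜 i → D (x * y) = D x * y + (Int.negOnePow i : ℤ) • (x * D y)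

namespace IsGradedLeibniz

variable {𝒜 : ℤ → AddSubgroup A} {D : A →+ A}

theorem map_one (hD : IsGradedLeibniz 𝒜 D) (one_grade : (1 : A) ∈ 𝒜 0) : D 1 = 0 := by
  simpa using hD 0 1 1 one_grade

theorem map_mul_of_mem_even (hD : IsGradedLeibniz 𝒜 D) {i : ℤ} (hi : Even i) {x : A}
    (hx : x ∈ 𝒜 i) (y : A) : D (x * y) = D x * y + x * D y := by
  simpa [Int.negOnePow_even i hi] using hD i x y hx

theorem map_mul_of_mem_odd (hD : IsGradedLeibniz 𝒜 D) {i : ℤ} (hi : Odd i) {x : A}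
    (hx : x ∈ 𝒜 i) (y : A) : D (x * y) = D x * y - x * D y := by
  simpa [Int.negOnePow_odd i hi, sub_eq_add_neg] using hD i x y hx

theorem map_map_mul_of_mem (hD : IsGradedLeibniz 𝒜 D)
    (D_grade : ∀ (i : ℤ) (x : A), x ∈ 𝒜 i → D x ∈ 𝒜 (i + 1))
    {i : ℤ} {x : A} (hx : x ∈ 𝒜 i) (y : A) :
    D (D (x * y)) = D (D x) * y + x * D (D y) := by
  rw [hD i x y hx, map_add, hD (i + 1) (D x) y (D_grade i x hx), map_zsmul,
    hD i x (D y) hx, Int.negOnePow_succ, smul_add, smul_smul, ← Units.val_mul,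
    Int.units_mul_self, Units.val_neg, neg_smul, Units.val_one, one_smul]
  abel

theorem mem_mulLeftCommutant_of_mem (hD : IsGradedLeibniz 𝒜 D)
    (D_grade : ∀ (i : ℤ) (x : A), x ∈ 𝒜 i → D x ∈ 𝒜 (i + 1))
    {i : ℤ} {x : A} (hx : x ∈ 𝒜 i) (hx2 : D (D x) = 0) :
    x ∈ mulLeftCommutant (D.comp D) := fun y => by
  simp only [AddMonoidHom.comp_apply, hD.map_map_mul_of_mem D_grade hx, hx2, zero_mul, zero_add]

end IsGradedLeibniz

theorem map_map_generators_eq_zero {D : A →+ A} {z e h : A} (hzc : ∀ a : A, z * a = a * z)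
    (hDz_mul : ∀ a, D (z * a) = z * D a) (hDe_mul : ∀ a, D (e * a) = D e * a + e * D a)
    (hDh_mul : ∀ a, D (h * a) = D h * a - h * D a)
    (hDe : D e = z * (e * h - h * e)) (hDh : D h = e - e ^ 2 - z * h ^ 2) :
    D (D e) = 0 ∧ D (D h) = 0 := by
  have mul_z_mul : ∀ a b : A, a * (z * b) = z * (a * b) := fun a b => by
    rw [← mul_assoc, ← hzc, mul_assoc]
  constructor
  · rw [hDe, hDz_mul, map_sub, hDe_mul, hDh_mul, hDe, hDh]
    simp only [pow_two, mul_sub, sub_mul, mul_assoc, mul_z_mul]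
    noncomm_ring
  · rw [hDh, pow_two, pow_two, map_sub, map_sub, hDe_mul, hDz_mul, hDh_mul, hDe, hDh]
    simp only [pow_two, mul_sub, sub_mul, mul_assoc, mul_z_mul]
    noncomm_ring

end

theorem dg_structure_on_idempotent_algebra_general
    (A : Type*) [Ring A]
    (𝒜 : ℤ → AddSubgroup A)
    (one_grade : (1 : A) ∈ 𝒜 0)
    (D : A →+ A)
    (D_grade : ∀ (i : ℤ) (x : A), x ∈ 𝒜 i → D x ∈ 𝒜 (i + 1))
    (leibniz : ∀ (i : ℤ) (x y : A), x ∈ 𝒜 i →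
      D (x * y) = D x * y + (Int.negOnePow i : ℤ) • (x * D y))
    (z e h : A)
    (hz : z ∈ 𝒜 2) (hzc : ∀ a : A, z * a = a * z)
    (he : e ∈ 𝒜 0) (hh : h ∈ 𝒜 (-1))
    (hDe : D e = z * (e * h - h * e))
    (hDh : D h = e - e ^ 2 - z * h ^ 2)
    (hDz : D z = 0) :
    ∀ x ∈ Subring.closure ({e, h, z} : Set A), D (D x) = 0 := by
  have hD : IsGradedLeibniz 𝒜 D := leibniz
  have hDz_mul (a : A) : D (z * a) = z * D a := by
    rw [hD.map_mul_of_mem_even even_two hz, hDz, zero_mul, zero_add]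
  obtain ⟨hDDe, hDDh⟩ := map_map_generators_eq_zero hzc hDz_mul
    (hD.map_mul_of_mem_even Even.zero he) (hD.map_mul_of_mem_odd odd_neg_one hh) hDe hDh
  have hgen : {e, h, z} ⊆ (mulLeftCommutant (D.comp D) : Set A) := by
    rintro g (rfl | rfl | rfl)
    · exact hD.mem_mulLeftCommutant_of_mem D_grade he hDDe
    · exact hD.mem_mulLeftCommutant_of_mem D_grade hh hDDh
    · exact hD.mem_mulLeftCommutant_of_mem D_grade hz (by rw [hDz, map_zero])
  intro x hx
  exact map_eq_zero_of_mem_mulLeftCommutant (Δ := D.comp D) (by simp [hD.map_one one_grade])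
    (Subring.closure_le.2 hgen hx)

/-- Let `A` be a graded ring (over a field `k`, e.g. the free
`k⟦z⟧`-algebra on generators `e`, `h`), with a central element `z` of degree `2`,
an element `e` of degree `0` and an element `h` of degree `-1`, and an additive map
`D` raising degree by `1`, satisfying the graded Leibniz rule and
`D e = z(eh - he)`, `D h = e - e² - z h²`, `D z = 0`.  Then `D² = 0` on the subring
generated by `e`, `h`, `z`: the stated relations are consistent with a dg algebra
structure on the free algebra. -/
theorem dg_structure_on_idempotent_algebra
    (A : Type*) [Ring A]
    (𝒜 : ℤ → AddSubgroup A)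
    (one_grade : (1 : A) ∈ 𝒜 0)
    (mul_grade : ∀ (i j : ℤ) (x y : A), x ∈ 𝒜 i → y ∈ 𝒜 j → x * y ∈ 𝒜 (i + j))
    (D : A →+ A)
    (D_grade : ∀ (i : ℤ) (x : A), x ∈ 𝒜 i → D x ∈ 𝒜 (i + 1))
    (leibniz : ∀ (i : ℤ) (x y : A), x ∈ 𝒜 i →
      D (x * y) = D x * y + (Int.negOnePow i : ℤ) • (x * D y))
    (z e h : A)
    (hz : z ∈ 𝒜 2) (hzc : ∀ a : A, z * a = a * z)
    (he : e ∈ 𝒜 0) (hh : h ∈ 𝒜 (-1))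
    (hDe : D e = z * (e * h - h * e))
    (hDh : D h = e - e ^ 2 - z * h ^ 2)
    (hDz : D z = 0) :
    ∀ x ∈ Subring.closure ({e, h, z} : Set A), D (D x) = 0 :=
  dg_structure_on_idempotent_algebra_general A 𝒜 one_grade D D_grade leibniz z e h hz hzc he hh hDe
    hDh hDz
end

section
/- Let R = C[x_1,...,x_n] and R^{S_n} ⊆ R the subring of symmetric polynomials. Then R is a free R^{S_n}-module with basis the monomials x_1^{a_1} x_2^{a_2} ··· x_{n-1}^{a_{n-1}} with 0 ≤ a_i ≤ n - i; in particular R has rank n! over R^{S_n}. -/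
/-!
Induct on `n` over an arbitrary domain `R`. Moving `x₀` into the coefficients identifies
`R[x₀, …, xₙ]` with `R[x₀][x₁, …, xₙ]`, which by induction is free over the polynomials symmetric
in `x₁, …, xₙ`, with basis the Artin monomials in `x₁, …, xₙ`. It remains to see that this ring
of partially symmetric polynomials is free over `R[x₀, …, xₙ]^{S_{n+1}}` with basis
`1, x₀, …, x₀ⁿ`. They span: `x₀` is a root of the monic polynomial `∏ⱼ (T - xⱼ)` of degree
`n + 1` with symmetric coefficients, and the elementary symmetric polynomials in `x₁, …, xₙ` are
polynomials in `x₀` over the symmetric ones, since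
`eₖ₊₁(x₀, …, xₙ) = eₖ₊₁(x₁, …, xₙ) + x₀ eₖ(x₁, …, xₙ)`.
They are independent: a relation `∑ sᵢ x₀ⁱ = 0` with symmetric `sᵢ` stays true with `x₀` replaced
by any `xⱼ`, and the Vandermonde determinant of `x₀, …, xₙ` is not zero.
-/

open Polynomial in
theorem Polynomial.aeval_mem_span_pow_of_monic {A B : Type*} [CommRing A] [Ring B] [Algebra A B]
    {x : B} {f : A[X]} (hf : f.Monic) (hfx : aeval x f = 0) (g : A[X]) :
    aeval x g ∈ Submodule.span A (Set.range fun i : Fin f.natDegree => x ^ (i : ℕ)) := by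
  refine PowerBasis.mem_span_pow'.2 ⟨g %ₘ f, ?_, (aeval_modByMonic_eq_self_of_root hfx).symm⟩
  rcases subsingleton_or_nontrivial A with hA | hA
  · simp [Subsingleton.elim (g %ₘ f) 0]
  · exact (degree_modByMonic_lt g hf).trans_le degree_le_natDegree

theorem Multiset.esymm_cons_succ {R : Type*} [CommSemiring R] (a : R) (s : Multiset R) (k : ℕ) :
    (a ::ₘ s).esymm (k + 1) = s.esymm (k + 1) + a * s.esymm k := by
  simp [Multiset.esymm, Multiset.powersetCard_cons, Multiset.sum_map_mul_left]

namespace MvPolynomial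

theorem esymm_fin_succ (R : Type*) [CommSemiring R] (n k : ℕ) :
    esymm (Fin (n + 1)) R (k + 1) =
      rename Fin.succ (esymm (Fin n) R (k + 1)) + X 0 * rename Fin.succ (esymm (Fin n) R k) := by
  have huniv : (Finset.univ.val.map X : Multiset (MvPolynomial (Fin (n + 1)) R)) =
      X 0 ::ₘ Finset.univ.val.map (X ∘ Fin.succ) := by
    simp [Fin.univ_val_map, List.ofFn_succ]
  have htail (j : ℕ) :
      rename Fin.succ (esymm (Fin n) R j) = (Finset.univ.val.map (X ∘ Fin.succ)).esymm j := by
    rw [← aeval_X_left_apply (rename _ _), aeval_rename, aeval_esymm_eq_multiset_esymm]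
  rw [htail, htail, esymm_eq_multiset_esymm, huniv, Multiset.esymm_cons_succ]

theorem exists_monic_aeval_X_eq_zero (σ R : Type*) [Fintype σ] [CommRing R] [Nontrivial R]
    (k : σ) :
    ∃ f : Polynomial (symmetricSubalgebra σ R), f.Monic ∧ f.natDegree = Fintype.card σ ∧
      Polynomial.aeval (X k : MvPolynomial σ R) f = 0 := by
  classical
  set p : Polynomial (MvPolynomial σ R) := ∏ j, (Polynomial.X - Polynomial.C (X j)) with hp
  have hp_monic : p.Monic :=
    Polynomial.monic_prod_of_monic _ _ fun j _ => Polynomial.monic_X_sub_C (X j)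
  have hsymm (m : ℕ) : (p.coeff m).IsSymmetric := by
    intro e
    have hmap : p.map (rename e).toRingHom = p := by
      simp only [hp, Polynomial.map_prod, Polynomial.map_sub, Polynomial.map_X, Polynomial.map_C,
        AlgHom.toRingHom_eq_coe, RingHom.coe_coe, rename_X]
      exact Equiv.prod_comp e fun j => Polynomial.X - Polynomial.C (X j : MvPolynomial σ R)
    simpa only [Polynomial.coeff_map, AlgHom.toRingHom_eq_coe, RingHom.coe_coe] using
      congrArg (Polynomial.coeff · m) hmap
  obtain ⟨f, hfp, hdeg, hmonic⟩ := Polynomial.lifts_and_natDegree_eq_and_monic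
    ((Polynomial.lifts_iff_coeff_lifts (f := algebraMap (symmetricSubalgebra σ R) _) p).2
      fun m => ⟨⟨_, hsymm m⟩, rfl⟩) hp_monic
  refine ⟨f, hmonic, ?_, ?_⟩
  · rw [hdeg, hp, Polynomial.natDegree_prod_of_monic _ _ fun j _ => Polynomial.monic_X_sub_C (X j)]
    simp
  · rw [Polynomial.aeval_def, ← Polynomial.eval_map, hfp, hp, Polynomial.eval_prod]
    exact Finset.prod_eq_zero (Finset.mem_univ k) (by simp)

theorem eq_zero_of_sum_mul_X_pow_eq_zero {R : Type*} [CommRing R] [IsDomain R] {n : ℕ}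
    {s : Fin n → MvPolynomial (Fin n) R} (hs : ∀ i, (s i).IsSymmetric) (k : Fin n)
    (h : ∑ i, s i * X k ^ (i : ℕ) = 0) : s = 0 := by
  refine Matrix.eq_zero_of_forall_index_sum_mul_pow_eq_zero (X_injective (R := R)) fun j => ?_
  simpa [hs _ (Equiv.swap k j)] using congrArg (rename (Equiv.swap k j)) h

section FinSuccCoeffEquiv

variable (R : Type*) [CommSemiring R] (n : ℕ)

noncomputable def finSuccCoeffEquiv :
    MvPolynomial (Fin (n + 1)) R ≃ₐ[R] MvPolynomial (Fin n) (Polynomial R) :=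
  (renameEquiv R (_root_.finSuccEquiv n)).trans (optionEquivRight R (Fin n))

variable {R n}

@[simp]
theorem finSuccCoeffEquiv_X_zero : finSuccCoeffEquiv R n (X 0) = C Polynomial.X := by
  simp [finSuccCoeffEquiv]

@[simp]
theorem finSuccCoeffEquiv_X_succ (i : Fin n) : finSuccCoeffEquiv R n (X i.succ) = X i := by
  simp [finSuccCoeffEquiv]

theorem finSuccCoeffEquiv_rename_succ (p : MvPolynomial (Fin n) R) :
    finSuccCoeffEquiv R n (rename Fin.succ p) = map Polynomial.C p := by
  have : (finSuccCoeffEquiv R n).toAlgHom.comp (rename Fin.succ) =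
      mapAlgHom (Algebra.ofId R (Polynomial R)) := by
    ext i
    simp
  exact DFunLike.congr_fun this p

theorem finSuccCoeffEquiv_symm_C (f : Polynomial R) :
    (finSuccCoeffEquiv R n).symm (C f) = Polynomial.aeval (X 0) f := by
  rw [AlgEquiv.symm_apply_eq, ← Polynomial.aeval_algHom_apply, finSuccCoeffEquiv_X_zero,
    ← algebraMap_eq, Polynomial.aeval_algebraMap_apply, Polynomial.aeval_X_left_apply,
    algebraMap_eq]

theorem IsSymmetric.finSuccCoeffEquiv {p : MvPolynomial (Fin (n + 1)) R} (hp : p.IsSymmetric) :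
    (finSuccCoeffEquiv R n p).IsSymmetric := by
  intro e
  have : ((rename e).restrictScalars R).comp (MvPolynomial.finSuccCoeffEquiv R n).toAlgHom =
      (MvPolynomial.finSuccCoeffEquiv R n).toAlgHom.comp
        (rename (Equiv.Perm.decomposeFin.symm (0, e))) := by
    ext i
    cases i using Fin.cases <;>
      simp [Equiv.Perm.decomposeFin_symm_apply_zero, Equiv.Perm.decomposeFin_symm_apply_succ]
  simpa [hp _] using DFunLike.congr_fun this p

end FinSuccCoeffEquiv

/-- The variable `x_{i+1}` of the informal statement is `X i`, so its exponent bound `n - i`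
becomes `n - 1 - i`. -/
abbrev ArtinExponent (n : ℕ) := {a : Fin n → ℕ // ∀ i : Fin n, a i ≤ n - 1 - (i : ℕ)}

instance (n : ℕ) : Fintype (ArtinExponent n) :=
  Fintype.subtype (Fintype.piFinset fun i : Fin n => Finset.range (n - i)) fun a => by
    simp only [Fintype.mem_piFinset, Finset.mem_range]
    exact forall_congr' fun i => by omega

instance : Unique (ArtinExponent 0) where
  default := ⟨Fin.elim0, fun i => i.elim0⟩
  uniq _ := Subtype.ext (_root_.funext fun i => i.elim0)

def ArtinExponent.succEquiv (n : ℕ) : ArtinExponent (n + 1) ≃ ArtinExponent n × Fin (n + 1) where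
  toFun a :=
    (⟨Fin.tail a.1, fun i => by
      have := a.2 i.succ
      simp only [Fin.val_succ] at this
      simp only [Fin.tail]
      omega⟩,
    ⟨a.1 0, by simpa [Nat.lt_succ_iff] using a.2 0⟩)
  invFun b := ⟨Fin.cons b.2 b.1.1, Fin.cases (by simpa [Nat.lt_succ_iff] using b.2.2) fun i => by
    have := b.1.2 i
    simp only [Fin.cons_succ, Fin.val_succ]
    omega⟩
  left_inv a := by ext i; cases i using Fin.cases <;> rfl
  right_inv _ := rfl

@[simp]
theorem ArtinExponent.coe_succEquiv_symm {n : ℕ} (b : ArtinExponent n × Fin (n + 1)) :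
    ((ArtinExponent.succEquiv n).symm b).1 = Fin.cons (b.2 : ℕ) b.1.1 :=
  rfl

theorem ArtinExponent.card (n : ℕ) : Fintype.card (ArtinExponent n) = n.factorial := by
  induction n with
  | zero => rfl
  | succ n ih =>
    rw [Fintype.card_congr (ArtinExponent.succEquiv n), Fintype.card_prod, ih, Fintype.card_fin,
      Nat.factorial_succ, mul_comm]

noncomputable def artinMonomial {R : Type*} [CommSemiring R] {n : ℕ} (a : ArtinExponent n) :
    MvPolynomial (Fin n) R :=
  ∏ i, X i ^ a.1 i

section InductiveStep

variable {R : Type*} [CommRing R] {n : ℕ}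

local notation "ψ" => finSuccCoeffEquiv R n

theorem rename_succ_esymm_mem_adjoin (j : ℕ) :
    rename Fin.succ (esymm (Fin n) R j) ∈
      Algebra.adjoin (symmetricSubalgebra (Fin (n + 1)) R)
        {(X 0 : MvPolynomial (Fin (n + 1)) R)} := by
  induction j with
  | zero => simpa only [esymm_zero, map_one] using Subalgebra.one_mem _
  | succ j ih =>
    rw [eq_sub_of_add_eq (esymm_fin_succ R n j).symm]
    exact Subalgebra.sub_mem _
      (Subalgebra.algebraMap_mem _
        (⟨_, esymm_isSymmetric (Fin (n + 1)) R (j + 1)⟩ : symmetricSubalgebra (Fin (n + 1)) R))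
      (Subalgebra.mul_mem _ (Algebra.self_mem_adjoin_singleton _ _) ih)

theorem finSuccCoeffEquiv_symm_mem_adjoin {q : MvPolynomial (Fin n) (Polynomial R)}
    (hq : q.IsSymmetric) :
    (ψ).symm q ∈ Algebra.adjoin (symmetricSubalgebra (Fin (n + 1)) R) {X 0} := by
  obtain ⟨F, hF⟩ := esymmAlgHom_surjective (Polynomial R) (Fintype.card_fin n).le ⟨q, hq⟩
  obtain rfl : q = aeval (fun i : Fin n => esymm (Fin n) (Polynomial R) (i + 1)) F := by
    rw [← esymmAlgHom_apply, hF]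
  clear hF hq
  induction F using MvPolynomial.induction_on with
  | C f =>
    rw [aeval_C, algebraMap_eq, finSuccCoeffEquiv_symm_C,
      ← Polynomial.aeval_map_algebraMap (symmetricSubalgebra (Fin (n + 1)) R)]
    exact Polynomial.aeval_mem_adjoin_singleton _ _
  | add F G hF hG => simpa only [map_add] using Subalgebra.add_mem _ hF hG
  | mul_X F i hF =>
    rw [map_mul, map_mul, aeval_X, ← map_esymm (Fin n) R _ Polynomial.C,
      ← finSuccCoeffEquiv_rename_succ, AlgEquiv.symm_apply_apply]
    exact Subalgebra.mul_mem _ hF (rename_succ_esymm_mem_adjoin _)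

theorem finSuccCoeffEquiv_symm_mem_span [Nontrivial R] {q : MvPolynomial (Fin n) (Polynomial R)}
    (hq : q.IsSymmetric) :
    (ψ).symm q ∈ Submodule.span (symmetricSubalgebra (Fin (n + 1)) R)
      (Set.range fun i : Fin (n + 1) => (X 0 : MvPolynomial (Fin (n + 1)) R) ^ (i : ℕ)) := by
  obtain ⟨f, hmonic, hdeg, hf⟩ := exists_monic_aeval_X_eq_zero (Fin (n + 1)) R 0
  have hmem := finSuccCoeffEquiv_symm_mem_adjoin hq
  rw [Algebra.adjoin_singleton_eq_range_aeval] at hmem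
  obtain ⟨g, hg⟩ := hmem
  have hspan := Polynomial.aeval_mem_span_pow_of_monic hmonic hf g
  rw [hdeg, Fintype.card_fin] at hspan
  exact hg ▸ hspan

theorem isSymmetric_finSuccCoeffEquiv_sum_mul_X_zero_pow
    (s : Fin (n + 1) → symmetricSubalgebra (Fin (n + 1)) R) :
    (ψ (∑ i, (s i : MvPolynomial (Fin (n + 1)) R) * X 0 ^ (i : ℕ))).IsSymmetric := by
  simp only [map_sum, map_mul, map_pow, finSuccCoeffEquiv_X_zero]
  exact (mem_symmetricSubalgebra _).1 <| Subalgebra.sum_mem _ fun i _ =>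
    Subalgebra.mul_mem _ (s i).2.finSuccCoeffEquiv (Subalgebra.pow_mem _ (IsSymmetric.C _) _)

variable (R n) in
/-- Bijectivity of this map says that the polynomials symmetric in `x₁, …, xₙ` form a free module
over the symmetric polynomials in `x₀, …, xₙ`, with basis `1, x₀, …, x₀ⁿ`. -/
noncomputable def xZeroPowCombination (s : Fin (n + 1) → symmetricSubalgebra (Fin (n + 1)) R) :
    symmetricSubalgebra (Fin n) (Polynomial R) :=
  ⟨_, isSymmetric_finSuccCoeffEquiv_sum_mul_X_zero_pow s⟩

theorem coe_xZeroPowCombination (s : Fin (n + 1) → symmetricSubalgebra (Fin (n + 1)) R) :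
    (xZeroPowCombination R n s : MvPolynomial (Fin n) (Polynomial R)) =
      ψ (∑ i, (s i : MvPolynomial (Fin (n + 1)) R) * X 0 ^ (i : ℕ)) :=
  rfl

theorem bijective_xZeroPowCombination [IsDomain R] :
    Function.Bijective (xZeroPowCombination R n) := by
  refine ⟨fun s t hst => ?_, fun q => ?_⟩
  · have hsum : ∑ i, ((s i - t i : symmetricSubalgebra (Fin (n + 1)) R) :
        MvPolynomial (Fin (n + 1)) R) * X 0 ^ (i : ℕ) = 0 := by
      simp only [Subalgebra.coe_sub, sub_mul, Finset.sum_sub_distrib, _root_.sub_eq_zero]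
      have := congrArg Subtype.val hst
      rw [coe_xZeroPowCombination, coe_xZeroPowCombination] at this
      exact (ψ).injective this
    have := eq_zero_of_sum_mul_X_pow_eq_zero
      (fun i => (mem_symmetricSubalgebra _).1 (s i - t i).2) 0 hsum
    exact _root_.sub_eq_zero.1 <| _root_.funext fun i => Subtype.ext <| congrFun this i
  · obtain ⟨s, hs⟩ := Submodule.mem_span_range_iff_exists_fun _ |>.1 <|
      finSuccCoeffEquiv_symm_mem_span q.2
    exact ⟨s, Subtype.ext <| (AlgEquiv.eq_symm_apply _).1 hs⟩

theorem finSuccCoeffEquiv_artinMonomial (b : ArtinExponent n) (i : Fin (n + 1)) :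
    ψ (artinMonomial ((ArtinExponent.succEquiv n).symm (b, i))) =
      C Polynomial.X ^ (i : ℕ) * artinMonomial b := by
  simp [artinMonomial, Fin.prod_univ_succ, map_prod]

theorem linearCombination_artinMonomial_succ
    (c : ArtinExponent (n + 1) → symmetricSubalgebra (Fin (n + 1)) R) :
    Fintype.linearCombination _ artinMonomial c = (ψ).symm (Fintype.linearCombination _
      artinMonomial fun b => xZeroPowCombination R n fun i =>
        c ((ArtinExponent.succEquiv n).symm (b, i))) := by
  rw [eq_comm, AlgEquiv.symm_apply_eq]
  simp only [Fintype.linearCombination_apply, Subalgebra.smul_def, smul_eq_mul,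
    coe_xZeroPowCombination, map_sum, map_mul, map_pow, finSuccCoeffEquiv_X_zero, Finset.sum_mul]
  rw [← (ArtinExponent.succEquiv n).symm.sum_comp, Fintype.sum_prod_type]
  simp only [finSuccCoeffEquiv_artinMonomial, mul_assoc]

end InductiveStep

theorem bijective_linearCombination_artinMonomial (R : Type*) [CommRing R] [IsDomain R] (n : ℕ) :
    Function.Bijective (Fintype.linearCombination (symmetricSubalgebra (Fin n) R)
      (artinMonomial (R := R) (n := n))) := by
  induction n generalizing R with
  | zero =>
    have hsymm (p : MvPolynomial (Fin 0) R) : p.IsSymmetric := fun e => by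
      rw [Subsingleton.elim e (Equiv.refl _), Equiv.coe_refl, rename_id_apply]
    have : ⇑(Fintype.linearCombination _ artinMonomial) =
        Subtype.val ∘ Equiv.funUnique (ArtinExponent 0) (symmetricSubalgebra (Fin 0) R) :=
      _root_.funext fun c => by
        simp [Fintype.linearCombination_apply, Subalgebra.smul_def, artinMonomial]
    rw [this]
    exact (show Function.Bijective Subtype.val from
      ⟨Subtype.val_injective, fun p => ⟨⟨p, hsymm p⟩, rfl⟩⟩).comp (Equiv.bijective _)
  | succ n ih =>
    have : ⇑(Fintype.linearCombination _ artinMonomial) =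
        (finSuccCoeffEquiv R n).symm ∘ Fintype.linearCombination _ artinMonomial ∘
          (fun d b => xZeroPowCombination R n (d b)) ∘
          ((ArtinExponent.succEquiv n).arrowCongr (Equiv.refl _)).trans (Equiv.curry _ _ _) :=
      _root_.funext linearCombination_artinMonomial_succ
    rw [this]
    exact (AlgEquiv.bijective _).comp <| (ih _).comp <|
      (Function.Bijective.piMap fun _ => bijective_xZeroPowCombination).comp (Equiv.bijective _)

noncomputable def artinBasis (R : Type*) [CommRing R] [IsDomain R] (n : ℕ) :
    Module.Basis (ArtinExponent n) (symmetricSubalgebra (Fin n) R) (MvPolynomial (Fin n) R) :=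
  .mk (linearIndependent_iff_injective_fintypeLinearCombination.2
      (bijective_linearCombination_artinMonomial R n).1)
    (by rw [← Fintype.range_linearCombination,
      LinearMap.range_eq_top.2 (bijective_linearCombination_artinMonomial R n).2])

theorem coe_artinBasis (R : Type*) [CommRing R] [IsDomain R] (n : ℕ) :
    ⇑(artinBasis R n) = artinMonomial :=
  _root_.funext (Module.Basis.mk_apply _ _)

end MvPolynomial

/-- **Artin basis theorem.**  `R = ℂ[x₁,…,xₙ]` is a free module over the
subring `R^{Sₙ}` of symmetric polynomials, with basis the monomials
`x₁^{a₁} ⋯ x_{n-1}^{a_{n-1}}` with `0 ≤ aᵢ ≤ n - i`; in particular the rank of `R`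
over `R^{Sₙ}` is `n!`.  (Here the variable `x_{i+1}` corresponds to `i : Fin n`,
with exponent bound `n - 1 - i`.) -/
theorem artin_basis_of_symmetric_polynomials (n : ℕ) :
    (∃ b : Module.Basis {a : Fin n → ℕ // ∀ i : Fin n, a i ≤ n - 1 - (i : ℕ)}
        (MvPolynomial.symmetricSubalgebra (Fin n) ℂ) (MvPolynomial (Fin n) ℂ),
      ∀ a, b a = ∏ i : Fin n, (MvPolynomial.X i : MvPolynomial (Fin n) ℂ) ^ a.1 i) ∧
    Nat.card {a : Fin n → ℕ // ∀ i : Fin n, a i ≤ n - 1 - (i : ℕ)} = n.factorial :=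
  ⟨⟨MvPolynomial.artinBasis ℂ n, congrFun (MvPolynomial.coe_artinBasis ℂ n)⟩,
    by rw [Nat.card_eq_fintype_card, MvPolynomial.ArtinExponent.card]⟩
end

section
/- Let B_s = R ⊗_{R^s} R where R = C[x_1, x_2] and R^s is the subring of symmetric polynomials. Then B_s ⊗_R B_s ≅ B_s ⊕ B_s as R,R-bimodules (ignoring grading shifts). Explicitly, R ⊗_{R^s} R ⊗_{R^s} R is isomorphic to (R ⊗_{R^s} R)^{⊕2} as an R,R-bimodule. -/
open scoped TensorProduct

namespace Stmt11

noncomputable abbrev R2 := MvPolynomial (Fin 2) ℂ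

/-- The subring of symmetric polynomials `Rˢ ⊆ ℂ[x₁,x₂]`. -/
noncomputable abbrev Rs : Subalgebra ℂ R2 := MvPolynomial.symmetricSubalgebra (Fin 2) ℂ

/-- The Bott–Samelson bimodule `B_s = R ⊗_{Rˢ} R`. -/
noncomputable abbrev Bs := R2 ⊗[Rs] R2

/-- `B_s ⊗_R B_s = R ⊗_{Rˢ} R ⊗_{Rˢ} R`. -/
noncomputable abbrev BsBs := Bs ⊗[Rs] R2

/-- Left multiplication by `r ∈ R` on `B_s` (action on the leftmost factor). -/
noncomputable def lmul2 (r : R2) : Bs →ₗ[Rs] Bs :=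
  LinearMap.rTensor R2 (LinearMap.mulLeft Rs r)

/-- Right multiplication by `r ∈ R` on `B_s` (action on the rightmost factor). -/
noncomputable def rmul2 (r : R2) : Bs →ₗ[Rs] Bs :=
  LinearMap.lTensor R2 (LinearMap.mulLeft Rs r)

/-- Left multiplication by `r ∈ R` on `B_s ⊗_R B_s`. -/
noncomputable def lmul3 (r : R2) : BsBs →ₗ[Rs] BsBs :=
  LinearMap.rTensor R2 (lmul2 r)

/-- Right multiplication by `r ∈ R` on `B_s ⊗_R B_s`. -/
noncomputable def rmul3 (r : R2) : BsBs →ₗ[Rs] BsBs :=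
  LinearMap.lTensor Bs (LinearMap.mulLeft Rs r)

/-! Over the symmetric polynomials, `R` is free with basis `1, X₀`: write `f = p + q X₀` with
`q = (f - s f) / (X₀ - X₁)`, which is a polynomial because `s` is the identity modulo
`X₀ - X₁`, and symmetric because both `f - s f` and `X₀ - X₁` are antisymmetric; then
`p = f - q X₀` is symmetric too. Substituting `R ≅ Rˢ ⊕ Rˢ` in the middle factor splits
`R ⊗ R ⊗ R` into two copies of `R ⊗ R`, and the outer actions are untouched. -/

section
variable {S M A A' B B' : Type*} [CommSemiring S]
  [AddCommMonoid M] [Module S M] [AddCommMonoid A] [Module S A] [AddCommMonoid A'] [Module S A']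
  [AddCommMonoid B] [Module S B] [AddCommMonoid B'] [Module S B']

noncomputable def tensorTensorEquivProd (e : M ≃ₗ[S] S × S) :
    (A ⊗[S] M) ⊗[S] B ≃ₗ[S] (A ⊗[S] B) × (A ⊗[S] B) :=
  LinearEquiv.rTensor B
      (LinearEquiv.lTensor A e ≪≫ₗ TensorProduct.prodRight S S A S S ≪≫ₗ
        (TensorProduct.rid S A).prodCongr (TensorProduct.rid S A)) ≪≫ₗ
    TensorProduct.prodLeft S S A A B

variable (e : M ≃ₗ[S] S × S)

@[simp]
theorem tensorTensorEquivProd_tmul (a : A) (m : M) (b : B) :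
    tensorTensorEquivProd e ((a ⊗ₜ m) ⊗ₜ b) =
      ((e m).1 • (a ⊗ₜ b), (e m).2 • (a ⊗ₜ b)) := by
  simp [tensorTensorEquivProd, TensorProduct.smul_tmul']

theorem tensorTensorEquivProd_rTensor_rTensor (f : A →ₗ[S] A') (t : (A ⊗[S] M) ⊗[S] B) :
    tensorTensorEquivProd e (LinearMap.rTensor B (LinearMap.rTensor M f) t) =
      (LinearMap.rTensor B f (tensorTensorEquivProd e t).1,
        LinearMap.rTensor B f (tensorTensorEquivProd e t).2) := by
  have : (tensorTensorEquivProd e).toLinearMap ∘ₗ LinearMap.rTensor B (LinearMap.rTensor M f) =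
      (LinearMap.rTensor B f).prodMap (LinearMap.rTensor B f) ∘ₗ
        (tensorTensorEquivProd e).toLinearMap :=
    TensorProduct.ext_threefold fun a m b => by simp
  exact LinearMap.congr_fun this t

theorem tensorTensorEquivProd_lTensor (g : B →ₗ[S] B') (t : (A ⊗[S] M) ⊗[S] B) :
    tensorTensorEquivProd e (LinearMap.lTensor (A ⊗[S] M) g t) =
      (LinearMap.lTensor A g (tensorTensorEquivProd e t).1,
        LinearMap.lTensor A g (tensorTensorEquivProd e t).2) := by
  have : (tensorTensorEquivProd e).toLinearMap ∘ₗ LinearMap.lTensor (A ⊗[S] M) g =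
      (LinearMap.lTensor A g).prodMap (LinearMap.lTensor A g) ∘ₗ
        (tensorTensorEquivProd e).toLinearMap :=
    TensorProduct.ext_threefold fun a m b => by simp
  exact LinearMap.congr_fun this t

end

open MvPolynomial

section
variable {K : Type*} [CommRing K]

noncomputable def swapVars : MvPolynomial (Fin 2) K →ₐ[K] MvPolynomial (Fin 2) K :=
  rename (Equiv.swap 0 1)

@[simp]
theorem swapVars_swapVars (f : MvPolynomial (Fin 2) K) : swapVars (swapVars f) = f := by
  simp [swapVars, rename_rename, ← Equiv.coe_trans, Equiv.swap_swap]

@[simp]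
theorem swapVars_X_zero : swapVars (X 0 : MvPolynomial (Fin 2) K) = X 1 := by simp [swapVars]

@[simp]
theorem swapVars_X_one : swapVars (X 1 : MvPolynomial (Fin 2) K) = X 0 := by simp [swapVars]

theorem mem_symmetricSubalgebra_fin_two_iff {f : MvPolynomial (Fin 2) K} :
    f ∈ symmetricSubalgebra (Fin 2) K ↔ swapVars f = f := by
  refine ⟨fun h => h _, fun h σ => ?_⟩
  obtain rfl | rfl : σ = 1 ∨ σ = Equiv.swap 0 1 := by revert σ; decide
  · exact rename_id_apply f
  · exact h

theorem X_sub_X_dvd_sub_swapVars (f : MvPolynomial (Fin 2) K) : X 0 - X 1 ∣ f - swapVars f := by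
  let π := Ideal.Quotient.mkₐ K (Ideal.span {(X 0 - X 1 : MvPolynomial (Fin 2) K)})
  have hX : π (X 0) = π (X 1) := by
    simp [π, Ideal.Quotient.mkₐ_eq_mk, Ideal.Quotient.eq]
  have : π.comp swapVars = π := algHom_ext fun i => by
    fin_cases i
    · simpa using hX.symm
    · simpa using hX
  rw [← Ideal.mem_span_singleton, ← Ideal.Quotient.eq, ← Ideal.Quotient.mkₐ_eq_mk K]
  exact (AlgHom.congr_fun this f).symm

theorem X_sub_X_ne_zero [Nontrivial K] : (X 0 - X 1 : MvPolynomial (Fin 2) K) ≠ 0 :=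
  sub_ne_zero.mpr (X_injective.ne (by decide))

local notation "Sym₂" => symmetricSubalgebra (Fin 2) K

theorem swapVars_coe (p : Sym₂) : swapVars (p : MvPolynomial (Fin 2) K) = p :=
  mem_symmetricSubalgebra_fin_two_iff.mp p.2

variable [IsDomain K]

theorem swapVars_eq_of_sub_swapVars_eq_mul {f q : MvPolynomial (Fin 2) K}
    (h : f - swapVars f = (X 0 - X 1) * q) : swapVars q = q := by
  have hs : (X 0 - X 1) * swapVars q = (X 0 - X 1) * q := by
    have := congrArg swapVars h
    simp only [map_sub, map_mul, swapVars_swapVars, swapVars_X_zero, swapVars_X_one] at this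
    linear_combination this + h
  exact mul_left_cancel₀ X_sub_X_ne_zero hs

theorem eq_zero_of_add_smul_X_zero_eq_zero {p q : Sym₂}
    (h : (p : MvPolynomial (Fin 2) K) + q • X 0 = 0) : p = 0 ∧ q = 0 := by
  rw [Subalgebra.smul_def, smul_eq_mul] at h
  have h' := congrArg swapVars h
  simp only [map_add, map_mul, swapVars_coe, swapVars_X_zero, map_zero] at h'
  have hq : (q : MvPolynomial (Fin 2) K) = 0 := by
    have : (X 0 - X 1) * (q : MvPolynomial (Fin 2) K) = 0 := by linear_combination h - h'
    exact (mul_eq_zero.mp this).resolve_left X_sub_X_ne_zero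
  have hp : (p : MvPolynomial (Fin 2) K) = 0 := by simpa [hq] using h
  exact ⟨Subtype.ext hp, Subtype.ext hq⟩

theorem exists_eq_add_smul_X_zero (f : MvPolynomial (Fin 2) K) :
    ∃ p q : Sym₂, (p : MvPolynomial (Fin 2) K) + q • X 0 = f := by
  obtain ⟨q, hq⟩ := X_sub_X_dvd_sub_swapVars f
  have hq_sym : swapVars q = q := swapVars_eq_of_sub_swapVars_eq_mul hq
  have hp_sym : swapVars (f - q * X 0) = f - q * X 0 := by
    simp only [map_sub, map_mul, hq_sym, swapVars_X_zero]
    linear_combination -hq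
  exact ⟨⟨_, mem_symmetricSubalgebra_fin_two_iff.mpr hp_sym⟩,
    ⟨q, mem_symmetricSubalgebra_fin_two_iff.mpr hq_sym⟩, sub_add_cancel f _⟩

noncomputable def symmetricProdEquiv : (Sym₂ × Sym₂) ≃ₗ[Sym₂] MvPolynomial (Fin 2) K :=
  .ofBijective ((LinearMap.id.smulRight 1).coprod (LinearMap.id.smulRight (X 0)))
    ⟨(injective_iff_map_eq_zero _).mpr fun (p, q) h => Prod.ext_iff.mpr <|
        eq_zero_of_add_smul_X_zero_eq_zero (by simpa [Subalgebra.smul_def] using h),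
      fun f => by
        obtain ⟨p, q, h⟩ := exists_eq_add_smul_X_zero f
        exact ⟨(p, q), by simpa [Subalgebra.smul_def] using h⟩⟩

end

/-- `B_s ⊗_R B_s ≅ B_s ⊕ B_s` as `R,R`-bimodules (ignoring grading
shifts): there is an `Rˢ`-linear equivalence
`R ⊗_{Rˢ} R ⊗_{Rˢ} R ≃ (R ⊗_{Rˢ} R)⊕² ` commuting with both the left and the right
multiplication by elements of `R`. -/
theorem BsBs_iso_Bs_oplus_Bs :
    ∃ φ : BsBs ≃ₗ[Rs] Bs × Bs,
      (∀ (r : R2) (t : BsBs),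
        φ (lmul3 r t) = (lmul2 r (φ t).1, lmul2 r (φ t).2)) ∧
      (∀ (r : R2) (t : BsBs),
        φ (rmul3 r t) = (rmul2 r (φ t).1, rmul2 r (φ t).2)) :=
  ⟨tensorTensorEquivProd symmetricProdEquiv.symm,
    fun r => tensorTensorEquivProd_rTensor_rTensor _ (LinearMap.mulLeft Rs r),
    fun r => tensorTensorEquivProd_lTensor _ (LinearMap.mulLeft Rs r)⟩

end Stmt11
end
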